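/- arXiv:1403.6696 — 5 statements merged into one kernel-verified Lean document; each statement's English description precedes it below -/
import Mathlib

section
/- Let n ≥ 5 be an integer, a ∈ ℂ, and b ∈ ℂ with b ≠ 0, and let A be the associated n×n tridiagonal matrix. For every k with 1 ≤ k ≤ n, the number λ_k = a + 2b·cos((k−1)π/(n−1)) is an eigenvalue of A, i.e. det(λ_k·I_n − A) = 0. -/
/-- The `n × n` complex tridiagonal matrix `A` (1-based indices): `A_{j,j} = a`,
`A_{1,2} = 2b`, `A_{2,1} = b`, `A_{n-1,n} = b`, `A_{n,n-1} = 2b`,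
`A_{j,j+1} = A_{j+1,j} = -b` for `2 ≤ j ≤ n-2`, all other entries `0`. -/
def matA (n : ℕ) (a b : ℂ) : Matrix (Fin n) (Fin n) ℂ :=
  Matrix.of fun i j =>
    let i' := (i : ℕ) + 1
    let j' := (j : ℕ) + 1
    if i' = j' then a
    else if i' = 1 ∧ j' = 2 then 2 * b
    else if i' = 2 ∧ j' = 1 then b
    else if i' = n - 1 ∧ j' = n then b
    else if i' = n ∧ j' = n - 1 then 2 * b
    else if (i' + 1 = j' ∨ j' + 1 = i') ∧ 2 ≤ min i' j' ∧ min i' j' ≤ n - 2 then -b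
    else 0

/-!
Conjugating by the sign matrix `E = boundarySign = diag(-1, 1, …, 1, -1)` turns `A` into
`a - b T`, where `T = neumannPath` is the adjacency matrix of the path on `n` vertices with its
two boundary rows doubled. The doubled rows mean that `T` acts on `w_j = cos (j φ)` as
`w_j ↦ w_{j-1} + w_{j+1}` for `w` extended evenly across `0` and across `n - 1`; the second
reflection is legitimate when `sin ((n - 1) φ) = 0`, and then `T w = 2 cos φ • w`. For
`θ = (k - 1) π / (n - 1)` the angle `φ = θ + π` qualifies and has `2 cos φ = -2 cos θ`, so
`a + 2 b cos θ` is an eigenvalue of `A`.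
-/

namespace Matrix

variable (R : Type*)

def boundarySign [Ring R] (n : ℕ) : Matrix (Fin n) (Fin n) R :=
  diagonal fun i => if (i : ℕ) = 0 ∨ (i : ℕ) = n - 1 then -1 else 1

def neumannPath [NonAssocSemiring R] (n : ℕ) : Matrix (Fin n) (Fin n) R :=
  of fun i j => (if (i : ℕ) = 0 ∨ (i : ℕ) = n - 1 then 2 else 1) *
    ((if (j : ℕ) = i + 1 then 1 else 0) + (if (i : ℕ) = j + 1 then 1 else 0))

theorem boundarySign_mul_self [Ring R] (n : ℕ) : boundarySign R n * boundarySign R n = 1 := by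
  rw [boundarySign, diagonal_mul_diagonal, ← diagonal_one]
  congr 1
  ext i
  split_ifs <;> norm_num

variable {R}

theorem neumannPath_mulVec_eq_smul [CommRing R] {n : ℕ} (hn : 2 ≤ n) {f : ℕ → R} {c : R}
    (hfirst : 2 * f 1 = c * f 0)
    (hrec : ∀ m, m + 2 < n → f (m + 2) + f m = c * f (m + 1))
    (hlast : 2 * f (n - 2) = c * f (n - 1)) :
    neumannPath R n *ᵥ (fun j : Fin n => f j) = c • fun j : Fin n => f j := by
  ext ⟨i, hi⟩
  simp only [mulVec, dotProduct, neumannPath, of_apply, Pi.smul_apply, smul_eq_mul]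
  rw [Fin.sum_univ_eq_sum_range (fun j => ((if i = 0 ∨ i = n - 1 then 2 else 1) *
    ((if j = i + 1 then 1 else 0) + (if i = j + 1 then 1 else 0)) : R) * f j) n]
  simp only [mul_add, add_mul, mul_ite, mul_one, mul_zero, ite_mul, zero_mul,
    Finset.sum_add_distrib, Finset.sum_ite_eq', Finset.mem_range]
  rcases i with _ | m
  · simp [show 1 < n by omega, hfirst]
  · simp only [Nat.add_right_cancel_iff, Finset.sum_ite_eq, Finset.mem_range]
    rcases eq_or_ne (m + 2) n with rfl | hm
    · simpa using hlast
    · simpa [show m + 2 < n by omega, show m + 1 ≠ n - 1 by omega, show m < n by omega]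
        using hrec m (by omega)

theorem neumannPath_mulVec_cos {n : ℕ} (hn : 2 ≤ n) {φ : ℂ}
    (hφ : Complex.sin ((n - 1) * φ) = 0) :
    neumannPath ℂ n *ᵥ (fun j : Fin n => Complex.cos (j * φ)) =
      (2 * Complex.cos φ) • fun j : Fin n => Complex.cos (j * φ) := by
  obtain ⟨m, rfl⟩ : ∃ m, n = m + 2 := ⟨n - 2, by omega⟩
  refine neumannPath_mulVec_eq_smul (f := fun j : ℕ => Complex.cos (j * φ)) hn (by simp)
    (fun l _ => ?_) ?_
  · rw [show ((l + 2 : ℕ) : ℂ) * φ = (l + 1) * φ + φ by push_cast; ring,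
      show (l : ℂ) * φ = (l + 1) * φ - φ by ring, Complex.cos_add, Complex.cos_sub]
    push_cast
    ring
  · have hsin : Complex.sin ((m + 1) * φ) = 0 := by
      rw [← hφ]; push_cast; ring_nf
    rw [Nat.add_sub_cancel, show m + 2 - 1 = m + 1 by omega,
      show (m : ℂ) * φ = (m + 1) * φ - φ by ring, Complex.cos_sub, hsin]
    push_cast
    ring

theorem det_neumannPath_sub_eq_zero {n : ℕ} (hn : 2 ≤ n) {φ : ℂ}
    (hφ : Complex.sin ((n - 1) * φ) = 0) :
    det (neumannPath ℂ n - (2 * Complex.cos φ) • 1) = 0 := by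
  rw [← exists_mulVec_eq_zero_iff]
  refine ⟨fun j : Fin n => Complex.cos (j * φ), fun h => ?_, ?_⟩
  · simpa using congrFun h ⟨0, by omega⟩
  · rw [sub_mulVec, neumannPath_mulVec_cos hn hφ, smul_mulVec, one_mulVec, sub_self]

end Matrix

open Matrix

theorem matA_eq_boundarySign_conj (n : ℕ) (hn : 3 ≤ n) (a b : ℂ) :
    matA n a b = a • 1 - b • (boundarySign ℂ n * neumannPath ℂ n * boundarySign ℂ n) := by
  ext i j
  have hi := i.isLt
  have hj := j.isLt
  simp only [matA, boundarySign, neumannPath, diagonal_mul, mul_diagonal, of_apply,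
    Matrix.sub_apply, Matrix.smul_apply, one_apply, Fin.ext_iff, smul_eq_mul]
  split_ifs <;> first | omega | ring

theorem eigenvalue_matA_general (n : ℕ) (hn : 5 ≤ n) (a b : ℂ)
    (k : ℕ) :
    Matrix.det
      ((a + 2 * b * (Real.cos (((k : ℝ) - 1) * Real.pi / ((n : ℝ) - 1)) : ℂ)) •
          (1 : Matrix (Fin n) (Fin n) ℂ) - matA n a b) = 0 := by
  push_cast
  set θ : ℂ := ((k : ℂ) - 1) * Real.pi / ((n : ℂ) - 1)
  have hsin : Complex.sin ((n - 1) * (θ + Real.pi)) = 0 := by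
    have hn1 : (n : ℂ) - 1 ≠ 0 := by
      rw [sub_ne_zero]; exact_mod_cast (show n ≠ 1 by omega)
    rw [show ((n : ℂ) - 1) * (θ + Real.pi) = ((k + n - 2 : ℤ) : ℂ) * Real.pi by
      simp only [θ]; field_simp; push_cast; ring]
    exact Complex.sin_int_mul_pi _
  have hfactor : (a + 2 * b * Complex.cos θ) • (1 : Matrix (Fin n) (Fin n) ℂ) - matA n a b =
      boundarySign ℂ n * (b • (neumannPath ℂ n - (2 * Complex.cos (θ + Real.pi)) • 1)) *
        boundarySign ℂ n := by
    rw [matA_eq_boundarySign_conj n (by omega), Complex.cos_add_pi]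
    simp only [mul_smul_comm, smul_mul_assoc, mul_sub, sub_mul, Matrix.mul_one,
      boundarySign_mul_self]
    module
  rw [hfactor, det_mul, det_mul, det_smul, det_neumannPath_sub_eq_zero (by omega) hsin]
  simp

/-- For `n ≥ 5`, `a b : ℂ` with `b ≠ 0`, each `λ_k = a + 2b·cos((k-1)π/(n-1))`,
`1 ≤ k ≤ n`, is an eigenvalue of `A`: `det(λ_k·I - A) = 0`. -/
theorem eigenvalue_matA (n : ℕ) (hn : 5 ≤ n) (a b : ℂ) (hb : b ≠ 0)
    (k : ℕ) (hk1 : 1 ≤ k) (hkn : k ≤ n) :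
    Matrix.det
      ((a + 2 * b * (Real.cos (((k : ℝ) - 1) * Real.pi / ((n : ℝ) - 1)) : ℂ)) •
          (1 : Matrix (Fin n) (Fin n) ℂ) - matA n a b) = 0 :=
  eigenvalue_matA_general n hn a b k
end

section
/- Let n ≥ 5 be an integer, a ∈ ℂ, and b ∈ ℂ with b ≠ 0, and let A† be the associated n×n tridiagonal matrix. For every k with 1 ≤ k ≤ n, the number λ†_k = a − 2b·cos(kπ/n) is an eigenvalue of A†, i.e. det(λ†_k·I_n − A†) = 0. -/
/-!
Conjugating `A†` by the diagonal sign matrix `D = diagonal (adagSign n)` gives `a • 1 + b • T`,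
where `T = loopedPathMatrix ℂ n` is the adjacency matrix of the path `0 - 1 - ⋯ - (n-1)` with a
loop at both ends. If a vector `w : ℤ → ℂ` is extended evenly past both ends (`w (-1) = w 0`,
`w n = w (n-1)`), the loops play the role of the missing neighbours, so
`(T w) i = w (i-1) + w (i+1)` in every row. Hence the discrete cosines `w p = cos ((p + 1/2) θ)`, `θ = m π / n`, are
eigenvectors of `T` with eigenvalue `2 cos θ`. For `m = n - k` this eigenvalue of `a • 1 + b • T`,
and so of `A†`, is `a + 2 b cos (π - k π / n) = λ†_k`, and the eigenvector is nonzero since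
`w 0 = cos (θ / 2) > 0`.
-/

/-- The `n × n` complex tridiagonal matrix `A†` (1-based indices): `A†_{1,1} = A†_{n,n} = a + b`,
`A†_{j,j} = a` for `2 ≤ j ≤ n-1`, `A†_{1,2} = A†_{2,1} = b`, `A†_{n-1,n} = A†_{n,n-1} = b`,
`A†_{j,j+1} = A†_{j+1,j} = -b` for `2 ≤ j ≤ n-2`, all other entries `0`. -/
def matAdag (n : ℕ) (a b : ℂ) : Matrix (Fin n) (Fin n) ℂ :=
  Matrix.of fun i j =>
    let i' := (i : ℕ) + 1
    let j' := (j : ℕ) + 1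
    if i' = j' then (if i' = 1 ∨ i' = n then a + b else a)
    else if (i' = 1 ∧ j' = 2) ∨ (i' = 2 ∧ j' = 1) ∨ (i' = n - 1 ∧ j' = n) ∨ (i' = n ∧ j' = n - 1) then b
    else if (i' + 1 = j' ∨ j' + 1 = i') ∧ 2 ≤ min i' j' ∧ min i' j' ≤ n - 2 then -b
    else 0

open Matrix Real

namespace Matrix

variable {ι R : Type*} [Fintype ι] [DecidableEq ι] [CommRing R]

theorem det_smul_one_sub_conj {P : Matrix ι ι R} (hP : P * P = 1) (c : R)
    (X : Matrix ι ι R) : det (c • 1 - P * X * P) = det (c • 1 - X) := by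
  have hconj : c • 1 - P * X * P = P * (c • 1 - X) * P := by
    rw [mul_sub, sub_mul, mul_smul_comm, mul_one, smul_mul_assoc, hP]
  rw [hconj, det_mul, det_mul, mul_right_comm, ← det_mul, hP, det_one, one_mul]

theorem det_smul_one_sub_eq_zero_of_mulVec_eq [IsDomain R] {X : Matrix ι ι R} {c : R}
    {v : ι → R} (hv : v ≠ 0) (h : X *ᵥ v = c • v) : det (c • 1 - X) = 0 :=
  exists_mulVec_eq_zero_iff.1 ⟨v, hv, by rw [sub_mulVec, smul_mulVec, one_mulVec, h, sub_self]⟩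

end Matrix

theorem Fin.sum_ite_intCast_eq {M : Type*} [AddCommMonoid M] (n : ℕ) (t : ℤ) (f : ℤ → M) :
    ∑ j : Fin n, (if (j : ℤ) = t then f j else 0) = if 0 ≤ t ∧ t < n then f t else 0 := by
  split_ifs with ht
  · lift t to ℕ using ht.1
    have ht' : t < n := by exact_mod_cast ht.2
    rw [Finset.sum_eq_single ⟨t, ht'⟩
      (fun j _ hj => if_neg fun h => hj (Fin.ext (by simpa using h))) (by simp)]
    simp
  · exact Finset.sum_eq_zero fun j _ => if_neg (by omega)

section

variable (R : Type*) [Semiring R]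

def loopedPathMatrix (n : ℕ) : Matrix (Fin n) (Fin n) R :=
  of (fun i j : Fin n => if (j : ℤ) = i - 1 ∨ (j : ℤ) = i + 1 then 1 else 0) +
    diagonal fun i : Fin n => if (i : ℕ) = 0 ∨ (i : ℕ) + 1 = n then 1 else 0

variable {R}

theorem loopedPathMatrix_mulVec_apply {n : ℕ} (hn : 2 ≤ n) (w : ℤ → R) (h₀ : w (-1) = w 0)
    (hₙ : w n = w (n - 1)) (i : Fin n) :
    (loopedPathMatrix R n *ᵥ fun j => w j) i = w (i - 1) + w (i + 1) := by
  have hadj : ∀ j : Fin n, (if (j : ℤ) = i - 1 ∨ (j : ℤ) = i + 1 then 1 else 0) * w j =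
      (if (j : ℤ) = i - 1 then w j else 0) + (if (j : ℤ) = i + 1 then w j else 0) := by
    intro j; split_ifs <;> first | omega | simp
  rw [loopedPathMatrix, add_mulVec, Pi.add_apply, mulVec_diagonal, mulVec, dotProduct]
  simp only [of_apply, hadj, Finset.sum_add_distrib, Fin.sum_ite_intCast_eq]
  obtain ⟨i, hi⟩ := i
  dsimp only
  split_ifs <;> try omega
  · simp
  · obtain rfl : n = i + 1 := by omega
    push_cast at hₙ
    rw [hₙ, add_sub_cancel_right, one_mul, add_zero]
  · obtain rfl : i = 0 := by omega
    simp [h₀, add_comm]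

end

noncomputable def discreteCos (θ : ℝ) (p : ℤ) : ℝ := cos ((p + 1 / 2) * θ)

theorem discreteCos_sub_one_add_discreteCos_add_one (θ : ℝ) (p : ℤ) :
    discreteCos θ (p - 1) + discreteCos θ (p + 1) = 2 * cos θ * discreteCos θ p := by
  simp only [discreteCos, Int.cast_sub, Int.cast_add, Int.cast_one]
  rw [show ((p : ℝ) - 1 + 1 / 2) * θ = (p + 1 / 2) * θ - θ by ring,
    show ((p : ℝ) + 1 + 1 / 2) * θ = (p + 1 / 2) * θ + θ by ring, cos_sub, cos_add]
  ring

theorem discreteCos_neg_one (θ : ℝ) : discreteCos θ (-1) = discreteCos θ 0 := by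
  rw [discreteCos, discreteCos, ← cos_neg]
  congr 1
  push_cast
  ring

theorem discreteCos_natCast_eq_sub_one {n : ℕ} (hn : n ≠ 0) (m : ℤ) :
    discreteCos (m * π / n) n = discreteCos (m * π / n) (n - 1) := by
  have hn' : (n : ℝ) ≠ 0 := Nat.cast_ne_zero.2 hn
  rw [discreteCos, discreteCos,
    show ((n : ℤ) + 1 / 2 : ℝ) * (m * π / n) = m * π / n / 2 + m * π by
      field_simp; push_cast; ring,
    show (((n : ℤ) - 1 : ℤ) + 1 / 2 : ℝ) * (m * π / n) = m * π - m * π / n / 2 by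
      field_simp; push_cast; ring,
    cos_add_int_mul_pi, cos_int_mul_pi_sub]

theorem discreteCos_zero_pos {θ : ℝ} (h₁ : -π < θ) (h₂ : θ < π) :
    0 < discreteCos θ 0 := by
  rw [discreteCos]
  exact cos_pos_of_mem_Ioo ⟨by push_cast; linarith, by push_cast; linarith⟩

theorem loopedPathMatrix_mulVec_discreteCos {n : ℕ} (hn : 2 ≤ n) (m : ℤ) :
    loopedPathMatrix ℂ n *ᵥ (fun j : Fin n => (discreteCos (m * π / n) j : ℂ)) =
      ((2 * cos (m * π / n) : ℝ) : ℂ) •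
        fun j : Fin n => (discreteCos (m * π / n) j : ℂ) := by
  ext i
  have h₀ := discreteCos_neg_one (m * π / n)
  have hₙ := discreteCos_natCast_eq_sub_one (n := n) (by omega) m
  rw [loopedPathMatrix_mulVec_apply hn (fun p => (discreteCos (m * π / n) p : ℂ))
    (by exact_mod_cast h₀) (by exact_mod_cast hₙ), Pi.smul_apply, smul_eq_mul,
    ← Complex.ofReal_add, ← Complex.ofReal_mul,
    discreteCos_sub_one_add_discreteCos_add_one]

/-- `adagSign n i * adagSign n (i + 1)` is the sign of the `(i, i + 1)` entry of `A†`: `+1` for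
the first and the last pair, `-1` otherwise. -/
noncomputable def adagSign (n : ℕ) (i : Fin n) : ℂ :=
  if (i : ℕ) = 0 ∨ (i : ℕ) + 1 = n then (-1) ^ (i : ℕ) else (-1) ^ ((i : ℕ) + 1)

theorem diagonal_adagSign_mul_self (n : ℕ) :
    diagonal (adagSign n) * diagonal (adagSign n) = 1 := by
  rw [diagonal_mul_diagonal, ← diagonal_one]
  congr 1
  ext i
  simp only [adagSign]
  split_ifs <;> rw [← pow_add, Even.neg_one_pow ⟨_, rfl⟩]

theorem matAdag_eq_conj {n : ℕ} (hn : 3 ≤ n) (a b : ℂ) :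
    matAdag n a b =
      diagonal (adagSign n) * (a • 1 + b • loopedPathMatrix ℂ n) * diagonal (adagSign n) := by
  ext ⟨i, hi⟩ ⟨j, hj⟩
  simp only [matAdag, loopedPathMatrix, adagSign, diagonal_mul, mul_diagonal, of_apply,
    Matrix.add_apply, Matrix.smul_apply, one_apply, diagonal_apply, Fin.mk.injEq, smul_eq_mul]
  obtain rfl | rfl | rfl | hfar :
      i = j ∨ j = i + 1 ∨ i = j + 1 ∨ i + 1 < j ∨ j + 1 < i := by omega
  all_goals
    split_ifs <;> (try simp only [false_or, not_true_eq_false, true_or, or_true, true_and] at *) <;>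
      first | omega | (ring_nf <;> simp [Even.mul_left])

theorem eigenvalue_matAdag_general (n : ℕ) (hn : 5 ≤ n) (a b : ℂ)
    (k : ℕ) (hk1 : 1 ≤ k) (hkn : k ≤ n) :
    Matrix.det
      ((a - 2 * b * (Real.cos ((k : ℝ) * Real.pi / (n : ℝ)) : ℂ)) •
          (1 : Matrix (Fin n) (Fin n) ℂ) - matAdag n a b) = 0 := by
  set θ : ℝ := (((n : ℤ) - k : ℤ) : ℝ) * π / n with hθ
  have hkπ : k * π / n ≤ π := by
    rw [div_le_iff₀ (by positivity), mul_comm π]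
    gcongr
  have hθ' : θ = π - k * π / n := by rw [hθ]; field_simp; push_cast; ring
  have heig : a - 2 * b * (cos (k * π / n) : ℂ) = a + b * ((2 * cos θ : ℝ) : ℂ) := by
    rw [hθ', cos_pi_sub]; push_cast; ring
  have hv : (fun j : Fin n => (discreteCos θ j : ℂ)) ≠ 0 := by
    intro h
    have h0 := congrFun h ⟨0, by omega⟩
    simp only [Pi.zero_apply, Nat.cast_zero, Complex.ofReal_eq_zero] at h0
    have hkπ_pos : 0 < k * π / n := by positivity
    exact (discreteCos_zero_pos (by linarith [pi_pos]) (by linarith)).ne' h0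
  rw [heig, matAdag_eq_conj (by omega), det_smul_one_sub_conj (diagonal_adagSign_mul_self n)]
  refine det_smul_one_sub_eq_zero_of_mulVec_eq hv ?_
  rw [add_mulVec, smul_mulVec, one_mulVec, smul_mulVec,
    loopedPathMatrix_mulVec_discreteCos (by omega), smul_smul, ← add_smul]

/-- For `n ≥ 5`, `a b : ℂ` with `b ≠ 0`, each `λ†_k = a - 2b·cos(kπ/n)`,
`1 ≤ k ≤ n`, is an eigenvalue of `A†`: `det(λ†_k·I - A†) = 0`. -/
theorem eigenvalue_matAdag (n : ℕ) (hn : 5 ≤ n) (a b : ℂ) (hb : b ≠ 0)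
    (k : ℕ) (hk1 : 1 ≤ k) (hkn : k ≤ n) :
    Matrix.det
      ((a - 2 * b * (Real.cos ((k : ℝ) * Real.pi / (n : ℝ)) : ℂ)) •
          (1 : Matrix (Fin n) (Fin n) ℂ) - matAdag n a b) = 0 :=
  eigenvalue_matAdag_general n hn a b k hk1 hkn
end

section
/- Let n ≥ 5 be an integer and c ∈ ℂ, and let B be the n×n complex matrix (rows and columns indexed 1,…,n) with B_{j,j} = c for all j, B_{1,2} = 2, B_{2,1} = 1, B_{n−1,n} = 1, B_{n,n−1} = 2, B_{j,j+1} = B_{j+1,j} = −1 for 2 ≤ j ≤ n−2, and all other entries 0. Then for every λ ∈ ℂ, the characteristic polynomial of B satisfies det(λ·I_n − B) = ((λ−c)² − 4)·U_{n−2}((λ−c)/2), where U_m denotes the m-th Chebyshev polynomial of the second kind. -/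
/-- Chebyshev polynomials of the second kind:
`U 0 x = 1`, `U 1 x = 2x`, `U (m+2) x = 2x * U (m+1) x - U m x`. -/
def chebU (x : ℂ) : ℕ → ℂ
  | 0 => 1
  | 1 => 2 * x
  | (m + 2) => 2 * x * chebU x (m + 1) - chebU x m


/-!
`λ • 1 - B` is tridiagonal, so expanding its determinant along the first row gives the
continuant recurrence `D_{k+2} = d D_{k+1} - u l D_k`, where `u l` is the product of the two
off-diagonal entries next to the removed corner. With `λ - c = 2x`, the trailing `k × k` blocks
(`k < n`) only meet the bottom corner, where `u l = 2`; elsewhere `u l = 1`, which is the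
recurrence of `2 T_k(x)`, and the corner value makes `D_2 = 4x² - 2 = 2 T_2(x)`. One more
expansion, now at the top corner with `u l = 2`, gives
`2x · 2T_{n-1}(x) - 2 · 2T_{n-2}(x) = 4 (x² - 1) U_{n-2}(x)`.
-/

open Matrix Polynomial Polynomial.Chebyshev

theorem chebU_eq_eval_U (x : ℂ) (m : ℕ) : chebU x m = (U ℂ m).eval x := by
  induction m using Nat.twoStepInduction with
  | zero => simp [chebU]
  | one => simp [chebU]
  | more m ih₀ ih₁ =>
    rw [chebU, ih₀, ih₁]
    push_cast
    simp [U_add_two]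

theorem X_mul_T_add_one_sub_T {R : Type*} [CommRing R] (m : ℤ) :
    X * T R (m + 1) - T R m = (X ^ 2 - 1) * U R m := by
  linear_combination T_eq_X_mul_T_sub_pol_U R m - T_add_two R m

theorem Matrix.det_succ_of_col_zero_eq_zero {R : Type*} [CommRing R] {k : ℕ}
    (A : Matrix (Fin (k + 1)) (Fin (k + 1)) R) (h : ∀ i : Fin k, A i.succ 0 = 0) :
    A.det = A 0 0 * (A.submatrix Fin.succ Fin.succ).det := by
  simp [det_succ_column_zero A, Fin.sum_univ_succ, h]

section Tridiagonal

variable {R : Type*} [CommRing R]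

def tridiag (d u l : ℕ → R) (i j : ℕ) : R :=
  if i = j then d i else if j = i + 1 then u i else if i = j + 1 then l j else 0

theorem tridiag_eq_zero {d u l : ℕ → R} {i j : ℕ} (h : i + 2 ≤ j ∨ j + 2 ≤ i) :
    tridiag d u l i j = 0 := by
  unfold tridiag
  rw [if_neg, if_neg, if_neg] <;> omega

@[simp]
theorem tridiag_self (d u l : ℕ → R) (i : ℕ) : tridiag d u l i i = d i := by
  simp [tridiag]

@[simp]
theorem tridiag_add_one_right (d u l : ℕ → R) (i : ℕ) : tridiag d u l i (i + 1) = u i := by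
  simp [tridiag]

@[simp]
theorem tridiag_add_one_left (d u l : ℕ → R) (i : ℕ) : tridiag d u l (i + 1) i = l i := by
  unfold tridiag
  rw [if_neg (by omega), if_neg (by omega), if_pos rfl]

def tridiagBlock (d u l : ℕ → R) (off k : ℕ) : Matrix (Fin k) (Fin k) R :=
  Matrix.of fun i j => tridiag d u l (off + i) (off + j)

theorem tridiagBlock_submatrix_succ (d u l : ℕ → R) (off k : ℕ) :
    (tridiagBlock d u l off (k + 1)).submatrix Fin.succ Fin.succ =
      tridiagBlock d u l (off + 1) k := by
  ext i j
  simp only [tridiagBlock, submatrix_apply, of_apply, Fin.val_succ]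
  congr 1 <;> omega

theorem det_tridiagBlock_add_two (d u l : ℕ → R) (off k : ℕ) :
    (tridiagBlock d u l off (k + 2)).det =
      d off * (tridiagBlock d u l (off + 1) (k + 1)).det -
        u off * l off * (tridiagBlock d u l (off + 2) k).det := by
  set A := tridiagBlock d u l off (k + 2)
  have minor_one : (A.submatrix Fin.succ (1 : Fin (k + 2)).succAbove).det =
      l off * (tridiagBlock d u l (off + 2) k).det := by
    rw [det_succ_of_col_zero_eq_zero]
    · have skip_one : (1 : Fin (k + 2)).succAbove ∘ Fin.succ = Fin.succ ∘ Fin.succ := by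
        funext j
        exact Fin.succ_succAbove_succ 0 j
      rw [submatrix_submatrix, skip_one, ← submatrix_submatrix, tridiagBlock_submatrix_succ,
        tridiagBlock_submatrix_succ]
      simp [A, tridiagBlock]
    · intro i
      exact tridiag_eq_zero (by simp)
  have corner_diag : A 0 0 = d off := by simp [A, tridiagBlock]
  have corner_super : A 0 1 = u off := by simp [A, tridiagBlock]
  have far_entries (j : Fin k) : A 0 j.succ.succ = 0 := tridiag_eq_zero (by simp)
  rw [det_succ_row_zero, Fin.sum_univ_succ, Fin.sum_univ_succ, Fin.succAbove_zero,
    tridiagBlock_submatrix_succ, Fin.succ_zero_eq_one, minor_one, corner_diag, corner_super,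
    Finset.sum_eq_zero fun j _ => by rw [far_entries j, mul_zero, zero_mul]]
  simp only [Fin.val_zero, Fin.val_one, pow_zero, pow_one]
  ring

end Tridiagonal

-- The off-diagonals of `λ • 1 - B`, indexed from `0`: position `i` joins rows `i` and `i + 1`.
def charSuperdiag (n i : ℕ) : ℂ := if i = 0 then -2 else if i = n - 2 then -1 else 1

def charSubdiag (n i : ℕ) : ℂ := if i = 0 then -1 else if i = n - 2 then -2 else 1

theorem smul_one_sub_matA_eq_tridiagBlock (n : ℕ) (c lam : ℂ) :
    lam • (1 : Matrix (Fin n) (Fin n) ℂ) - matA n c 1 =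
      tridiagBlock (fun _ => lam - c) (charSuperdiag n) (charSubdiag n) 0 n := by
  ext i j
  have hi := i.isLt
  have hj := j.isLt
  simp only [Matrix.sub_apply, Matrix.smul_apply, one_apply, smul_eq_mul, matA, of_apply,
    tridiagBlock, tridiag, charSuperdiag, charSubdiag, zero_add, Fin.ext_iff]
  split_ifs <;> first | (exfalso; omega) | ring

theorem det_tridiagBlock_char_eq_two_mul_T {n : ℕ} (x : ℂ) (k : ℕ) {off : ℕ} (hoff : 0 < off)
    (hn : off + (k + 1) = n) :
    (tridiagBlock (fun _ => 2 * x) (charSuperdiag n) (charSubdiag n) off (k + 1)).det =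
      2 * (T ℂ (k + 1 : ℕ)).eval x := by
  induction k using Nat.twoStepInduction generalizing off with
  | zero => simp [det_unique, tridiagBlock]
  | one =>
    have bottom_corner : charSuperdiag n off * charSubdiag n off = 2 := by
      norm_num [charSuperdiag, charSubdiag, show off = n - 2 by omega, show n - 2 ≠ 0 by omega]
    rw [det_tridiagBlock_add_two, bottom_corner]
    simp only [det_unique, det_fin_zero, Fin.default_eq_zero, tridiagBlock, of_apply,
      Fin.val_zero, add_zero, tridiag_self, Nat.reduceAdd, Nat.cast_ofNat, T_two, eval_sub,
      eval_mul, eval_pow, eval_X, eval_ofNat, eval_one]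
    ring
  | more k ih₀ ih₁ =>
    have interior : charSuperdiag n off * charSubdiag n off = 1 := by
      simp [charSuperdiag, charSubdiag, show off ≠ 0 by omega, show off ≠ n - 2 by omega]
    rw [det_tridiagBlock_add_two, interior, ih₁ (by omega) (by omega), ih₀ (by omega) (by omega)]
    push_cast
    rw [show (k : ℤ) + 2 + 1 = k + 1 + 2 by ring, T_add_two]
    simp only [eval_sub, eval_mul, eval_ofNat, eval_X]
    ring

/-- For `n ≥ 5` and `c λ : ℂ`, the matrix `B` (which is `A` with `a = c`, `b = 1`)
satisfies `det(λ·I - B) = ((λ-c)² - 4)·U_{n-2}((λ-c)/2)`. -/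
theorem charpoly_matB (n : ℕ) (hn : 5 ≤ n) (c : ℂ) (lam : ℂ) :
    Matrix.det (lam • (1 : Matrix (Fin n) (Fin n) ℂ) - matA n c 1) =
      ((lam - c) ^ 2 - 4) * chebU ((lam - c) / 2) (n - 2) := by
  obtain ⟨m, rfl⟩ : ∃ m, n = m + 3 := ⟨n - 3, by omega⟩
  have hx : lam - c = 2 * ((lam - c) / 2) := by ring
  set x := (lam - c) / 2
  have top_corner : charSuperdiag (m + 3) 0 * charSubdiag (m + 3) 0 = 2 := by
    norm_num [charSuperdiag, charSubdiag]
  have chebyshev := congrArg (eval x) (X_mul_T_add_one_sub_T (R := ℂ) (m + 1))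
  simp only [eval_sub, eval_mul, eval_X, eval_pow, eval_one] at chebyshev
  rw [smul_one_sub_matA_eq_tridiagBlock, hx, det_tridiagBlock_add_two, zero_add, zero_add,
    top_corner, det_tridiagBlock_char_eq_two_mul_T x (m + 1) one_pos (by omega),
    det_tridiagBlock_char_eq_two_mul_T x m two_pos (by omega),
    show m + 3 - 2 = m + 1 from rfl, chebU_eq_eval_U]
  push_cast at chebyshev ⊢
  linear_combination 4 * chebyshev
end

section
/- Let n ≥ 5 be an integer, a ∈ ℂ, and b ∈ ℂ with b ≠ 0, and let A be the associated n×n tridiagonal matrix. Then det(A) = ∏_{k=1}^{n} (a + 2b·cos((k−1)π/(n−1))). -/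
namespace Matrix

variable {R : Type*} [CommRing R]

theorem det_succ_of_row_last_eq_zero {n : ℕ} (M : Matrix (Fin (n + 1)) (Fin (n + 1)) R)
    (hM : ∀ j : Fin n, M (Fin.last n) j.castSucc = 0) :
    M.det = M (Fin.last n) (Fin.last n) * (M.submatrix Fin.castSucc Fin.castSucc).det := by
  rw [det_succ_row _ (Fin.last n), Fin.sum_univ_castSucc,
    Finset.sum_eq_zero fun j _ => by rw [hM, mul_zero, zero_mul], zero_add,
    ← two_mul, pow_mul, neg_one_sq, one_pow, one_mul, Fin.succAbove_last]

def tridiag (d c e : ℕ → R) (n : ℕ) : Matrix (Fin n) (Fin n) R :=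
  of fun i j =>
    if (j : ℕ) = i + 1 then c i
    else if (i : ℕ) = j + 1 then e j
    else if (i : ℕ) = j then d i
    else 0

variable (d c e : ℕ → R)

theorem tridiag_submatrix_castSucc (n : ℕ) :
    (tridiag d c e (n + 1)).submatrix Fin.castSucc Fin.castSucc = tridiag d c e n :=
  rfl

theorem tridiag_apply_eq_zero {n : ℕ} {i j : Fin n} (hij : (i : ℕ) + 1 < j ∨ (j : ℕ) + 1 < i) :
    tridiag d c e n i j = 0 := by
  simp only [tridiag, of_apply]
  split_ifs <;> first | rfl | omega

theorem tridiag_apply_of_succ_eq {n : ℕ} {i j : Fin n} (hij : (j : ℕ) = i + 1) :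
    tridiag d c e n i j = c i := by
  simp [tridiag, hij]

theorem tridiag_apply_of_eq_succ {n : ℕ} {i j : Fin n} (hij : (i : ℕ) = j + 1) :
    tridiag d c e n i j = e j := by
  simp only [tridiag, of_apply]
  split_ifs <;> first | rfl | omega

theorem tridiag_apply_self {n : ℕ} (i : Fin n) : tridiag d c e n i i = d i := by
  simp [tridiag]

theorem det_tridiag_succ_succ (n : ℕ) :
    (tridiag d c e (n + 2)).det =
      d (n + 1) * (tridiag d c e (n + 1)).det - c n * e n * (tridiag d c e n).det := by
  have hminor : ((tridiag d c e (n + 2)).submatrix (Fin.last n).castSucc.succAbove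
      Fin.castSucc).det = e n * (tridiag d c e n).det := by
    rw [det_succ_of_row_last_eq_zero]
    · have hrow : (Fin.last n).castSucc.succAbove (Fin.last n) = Fin.last (n + 1) := by
        simp [Fin.succAbove]
      have hsub : ((tridiag d c e (n + 2)).submatrix (Fin.last n).castSucc.succAbove
          Fin.castSucc).submatrix Fin.castSucc Fin.castSucc = tridiag d c e n := by
        ext i j
        simp [Fin.succAbove, Fin.lt_def, tridiag]
      rw [hsub, submatrix_apply, hrow, tridiag_apply_of_eq_succ _ _ _ (by simp)]
      rfl
    · exact fun j => tridiag_apply_eq_zero _ _ _ (by simp)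
  rw [det_succ_column _ (Fin.last (n + 1)), Fin.sum_univ_castSucc, Fin.sum_univ_castSucc,
    Finset.sum_eq_zero fun i _ => ?_, zero_add, Fin.succAbove_last, hminor,
    tridiag_submatrix_castSucc]
  · rw [tridiag_apply_of_succ_eq _ _ _ (by simp), tridiag_apply_self]
    simp only [Fin.val_castSucc, Fin.val_last]
    rw [← add_assoc, ← two_mul, ← two_mul, pow_succ, pow_mul, pow_mul, neg_one_sq, one_pow]
    ring
  · rw [tridiag_apply_eq_zero _ _ _ (by simp), mul_zero, zero_mul]

theorem det_tridiag_const_eq_pow_add_pow (x y : R) {N : ℕ} (h₀ : c 0 * e 0 = 2 * (x * y))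
    (h : ∀ i, 0 < i → i < N → c i * e i = x * y) :
    ∀ k ≤ N, (tridiag (fun _ => x + y) c e (k + 1)).det = x ^ (k + 1) + y ^ (k + 1) := by
  intro k hk
  induction k using Nat.twoStepInduction with
  | zero => simp [tridiag]
  | one =>
    rw [det_tridiag_succ_succ, h₀, det_fin_one, det_fin_zero, tridiag_apply_self]
    ring
  | more k ih₁ ih₂ =>
    rw [det_tridiag_succ_succ, ih₁ (by omega), ih₂ (by omega), h (k + 1) (by omega) (by omega)]
    ring

end Matrix

open Polynomial in
theorem exists_add_eq_and_mul_eq {K : Type*} [Field K] [IsAlgClosed K] (s p : K) :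
    ∃ x y : K, x + y = s ∧ x * y = p := by
  have hdeg : (X ^ 2 - C s * X + C p).degree = 2 := by compute_degree!
  obtain ⟨x, hx⟩ := IsAlgClosed.exists_root _ (hdeg ▸ two_ne_zero)
  refine ⟨x, s - x, by ring, ?_⟩
  simp only [IsRoot, eval_add, eval_sub, eval_mul, eval_pow, eval_X, eval_C] at hx
  linear_combination -hx

open Polynomial in
theorem IsPrimitiveRoot.pow_sub_pow_eq_prod_range {R : Type*} [CommRing R] [IsDomain R] {ζ : R}
    {m : ℕ} (hζ : IsPrimitiveRoot ζ m) (hm : 0 < m) (x y : R) :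
    x ^ m - y ^ m = ∏ k ∈ Finset.range m, (x - ζ ^ k * y) := by
  simpa [eval_prod] using congrArg (eval x) (X_pow_sub_C_eq_prod hζ hm (rfl : y ^ m = y ^ m))

namespace Complex

open Finset Real

theorem mul_add_add_two_mul_cos {x y b : ℂ} (hp : x * y = b ^ 2) (z : ℂ) :
    x * (x + y + 2 * b * cos z) = (x + b * exp (z * I)) * (x + b * exp (-z * I)) := by
  have hexp : exp (z * I) * exp (-z * I) = 1 := by rw [← exp_add]; simp
  linear_combination hp + b * x * two_cos z - b ^ 2 * hexp

theorem exp_neg_nat_mul_pi_div_mul_I {m k : ℕ} (hk : k ≤ m) (hm : m ≠ 0) :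
    exp (-(k * π / m) * I) = -exp ((m - k : ℕ) * π / m * I) := by
  have harg : ((m - k : ℕ) : ℂ) * π / m * I = π * I + -(k * π / m) * I := by
    push_cast [Nat.cast_sub hk]
    field_simp
    ring
  rw [harg, exp_add, exp_pi_mul_I]
  ring

theorem prod_add_add_two_mul_cos {m : ℕ} (hm : 0 < m) {x y b : ℂ} (hx : x ≠ 0)
    (hp : x * y = b ^ 2) :
    ∏ k ∈ range (m + 1), (x + y + 2 * b * (Real.cos (k * π / m) : ℂ)) =
      (x - y) * (x ^ m - y ^ m) := by
  set ω : ℕ → ℂ := fun k => exp (k * π / m * I)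
  set ζ : ℂ := exp (2 * π * I / m)
  have hζ : IsPrimitiveRoot ζ m := isPrimitiveRoot_exp m hm.ne'
  have hcos (k : ℕ) : x * (x + y + 2 * b * (Real.cos (k * π / m) : ℂ)) =
      (x + b * ω k) * (x + b * exp (-(k * π / m) * I)) := by
    rw [ofReal_cos]
    push_cast
    exact mul_add_add_two_mul_cos hp _
  have hreflect : ∏ k ∈ range (m + 1), (x + b * exp (-(k * π / m) * I)) =
      ∏ k ∈ range (m + 1), (x - b * ω k) := by
    rw [← prod_range_reflect]
    refine prod_congr rfl fun k hk => ?_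
    have hkm : k ≤ m := Nat.lt_succ_iff.mp (mem_range.mp hk)
    rw [exp_neg_nat_mul_pi_div_mul_I (by omega) hm.ne']
    simp only [ω, add_tsub_cancel_right, Nat.sub_sub_self hkm]
    ring
  have hsq (k : ℕ) : (x + b * ω k) * (x - b * ω k) = x * (x - ζ ^ k * y) := by
    have hωζ : ω k ^ 2 = ζ ^ k := by
      simp only [ω, ζ, ← exp_nat_mul]
      congr 1
      ring
    linear_combination ζ ^ k * hp - b ^ 2 * hωζ
  have hroots : ∏ k ∈ range (m + 1), (x - ζ ^ k * y) = (x - y) * (x ^ m - y ^ m) := by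
    rw [prod_range_succ, ← hζ.pow_sub_pow_eq_prod_range hm, hζ.pow_eq_one]
    ring
  apply mul_left_cancel₀ (pow_ne_zero (m + 1) hx)
  calc x ^ (m + 1) * ∏ k ∈ range (m + 1), (x + y + 2 * b * (Real.cos (k * π / m) : ℂ))
      = ∏ k ∈ range (m + 1), (x + b * ω k) * (x + b * exp (-(k * π / m) * I)) := by
        rw [← prod_congr rfl fun k _ => hcos k, ← pow_card_mul_prod, card_range]
    _ = ∏ k ∈ range (m + 1), x * (x - ζ ^ k * y) := by
        rw [prod_mul_distrib, hreflect, ← prod_mul_distrib]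
        exact prod_congr rfl fun k _ => hsq k
    _ = x ^ (m + 1) * ((x - y) * (x ^ m - y ^ m)) := by
        rw [← pow_card_mul_prod, card_range, hroots]

end Complex

theorem matA_eq_tridiag (m : ℕ) (a b : ℂ) :
    matA (m + 3) a b =
      Matrix.tridiag (fun _ => a) (fun i => if i = 0 then 2 * b else if i = m + 1 then b else -b)
        (fun i => if i = 0 then b else if i = m + 1 then 2 * b else -b) (m + 3) := by
  ext i j
  simp only [matA, Matrix.tridiag, Matrix.of_apply]
  split_ifs <;> first | rfl | omega

theorem det_matA_eq {m : ℕ} {a b x y : ℂ} (hs : x + y = a) (hp : x * y = b ^ 2) :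
    (matA (m + 3) a b).det = (x - y) * (x ^ (m + 2) - y ^ (m + 2)) := by
  subst hs
  have h₀ : 2 * b * b = 2 * (x * y) := by rw [hp]; ring
  have h : ∀ i, 0 < i → i < m + 1 →
      (if i = 0 then 2 * b else if i = m + 1 then b else -b) *
        (if i = 0 then b else if i = m + 1 then 2 * b else -b) = x * y := by
    intro i hi hi'
    rw [if_neg hi.ne', if_neg hi'.ne, if_neg hi.ne', if_neg hi'.ne, neg_mul_neg, ← sq, hp]
  have hD := Matrix.det_tridiag_const_eq_pow_add_pow _ _ x y (by simpa using h₀) h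
  rw [matA_eq_tridiag, Matrix.det_tridiag_succ_succ, hD (m + 1) le_rfl, hD m (by omega)]
  simp only [if_neg (by omega : m + 1 ≠ 0), if_true]
  linear_combination 2 * (x ^ (m + 1) + y ^ (m + 1)) * hp

/-- For `n ≥ 5`, `a b : ℂ` with `b ≠ 0`,
`det A = ∏_{k=1}^{n} (a + 2b·cos((k-1)π/(n-1)))`. -/
theorem det_matA_prod (n : ℕ) (hn : 5 ≤ n) (a b : ℂ) (hb : b ≠ 0) :
    Matrix.det (matA n a b) =
      ∏ k ∈ Finset.Icc 1 n,
        (a + 2 * b * (Real.cos (((k : ℝ) - 1) * Real.pi / ((n : ℝ) - 1)) : ℂ)) := by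
  obtain ⟨m, rfl⟩ : ∃ m, n = m + 3 := ⟨n - 3, by omega⟩
  obtain ⟨x, y, hs, hp⟩ := exists_add_eq_and_mul_eq a (b ^ 2)
  have hx : x ≠ 0 := left_ne_zero_of_mul (hp ▸ pow_ne_zero 2 hb)
  rw [det_matA_eq hs hp, ← Complex.prod_add_add_two_mul_cos (by omega) hx hp,
    ← Finset.Ico_add_one_right_eq_Icc, Finset.prod_Ico_eq_prod_range, add_tsub_cancel_right, hs]
  refine Finset.prod_congr rfl fun k _ => ?_
  push_cast
  ring_nf
end

section
/- For every integer n ≥ 1, the n-th Fibonacci number has the complex factorization F_n = ∏_{k=1}^{n−1} (1 − 2i·cos(kπ/n)), where i = √−1. -/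
/-!
The numbers `cos (k π / n)`, `1 ≤ k < n`, are the `n - 1` roots of the Chebyshev polynomial
`U_{n-1}`, whose leading coefficient is `2 ^ (n - 1)`. On the other hand
`F_n = i ^ (n - 1) U_{n-1}(-i/2)`, because `m ↦ i ^ m U_m(-i/2)` obeys the Fibonacci recurrence.
Evaluating the factorization of `U_{n-1}` at `-i/2` gives the product.
-/

open Polynomial Finset Real

namespace Polynomial.Chebyshev

theorem fib_succ_eq_pow_mul_eval_S {R : Type*} [CommRing R] {i : R} (hi : i * i = -1) (n : ℕ) :
    (Nat.fib (n + 1) : R) = i ^ n * (S R n).eval (-i) := by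
  induction n using Nat.twoStepInduction with
  | zero => simp
  | one => simp [hi]
  | more n ih₀ ih₁ =>
    rw [Nat.fib_add_two, Nat.cast_add, ih₀, ih₁]
    push_cast
    simp only [S_add_two, eval_sub, eval_mul, eval_X]
    linear_combination (i ^ (n + 1) * (S R (n + 1)).eval (-i) + i ^ n * (S R n).eval (-i)) * hi

theorem U_real_eq_prod (n : ℕ) :
    U ℝ n = Polynomial.C (2 ^ n) *
      ∏ k ∈ range n, (X - Polynomial.C (cos ((k + 1) * π / (n + 1)))) := by
  have hroots : (U ℝ n).roots = (Multiset.range n).map fun k : ℕ ↦ cos ((k + 1) * π / (n + 1)) := by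
    rw [roots_U_real, Finset.image_val, Finset.range_val,
      Multiset.dedup_eq_self.mpr (roots_U_real_nodup n)]
  have hcard : Multiset.card (U ℝ n).roots = (U ℝ n).natDegree := by
    rw [hroots, Multiset.card_map, Multiset.card_range, natDegree_U_natCast]
  conv_lhs => rw [← C_leadingCoeff_mul_prod_multiset_X_sub_C hcard]
  rw [leadingCoeff_U_natCast, hroots, Multiset.map_map]
  rfl

theorem eval_U_eq_prod {A : Type*} [CommRing A] [Algebra ℝ A] (n : ℕ) (z : A) :
    (U A n).eval z =
      2 ^ n * ∏ k ∈ range n, (z - algebraMap ℝ A (cos ((k + 1) * π / (n + 1)))) := by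
  rw [← aeval_U (R := ℝ), U_real_eq_prod]
  simp [map_ofNat]

end Polynomial.Chebyshev

open Polynomial.Chebyshev in
/-- For `n ≥ 1`, the `n`-th Fibonacci number has the complex factorization
`F_n = ∏_{k=1}^{n-1} (1 - 2i·cos(kπ/n))`. -/
theorem fib_complex_factorization (n : ℕ) (hn : 1 ≤ n) :
    (Nat.fib n : ℂ) =
      ∏ k ∈ Finset.Icc 1 (n - 1),
        (1 - 2 * Complex.I * (Real.cos ((k : ℝ) * Real.pi / (n : ℝ)) : ℂ)) := by
  obtain ⟨n, rfl⟩ := Nat.exists_eq_add_of_le' hn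
  have hS : (S ℂ n).eval (-Complex.I) = (U ℂ n).eval (-Complex.I / 2) := by
    rw [← S_comp_two_mul_X, eval_comp]
    simp [mul_div_cancel₀]
  have hfactor : ∀ k ∈ range n, 1 - 2 * Complex.I * (Real.cos ((k + 1) * π / (n + 1)) : ℂ) =
      Complex.I * 2 * (-Complex.I / 2 - (Real.cos ((k + 1) * π / (n + 1)) : ℂ)) :=
    fun _ _ ↦ by linear_combination Complex.I_mul_I
  calc (Nat.fib (n + 1) : ℂ)
      = (Complex.I * 2) ^ n * ∏ k ∈ range n,
          (-Complex.I / 2 - (Real.cos ((k + 1) * π / (n + 1)) : ℂ)) := by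
        rw [fib_succ_eq_pow_mul_eval_S Complex.I_mul_I, hS, eval_U_eq_prod, ← mul_assoc, mul_pow,
          Complex.coe_algebraMap]
    _ = ∏ k ∈ range n, (1 - 2 * Complex.I * (Real.cos ((k + 1) * π / (n + 1)) : ℂ)) := by
        rw [prod_congr rfl hfactor, prod_mul_distrib, prod_const, card_range]
    _ = _ := by
        rw [Nat.add_sub_cancel, ← Finset.Ico_add_one_right_eq_Icc, prod_Ico_eq_prod_range]
        simp [add_comm]
end
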